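/- Expansivity of the annealed density function R: for all φ₁, φ₂ ≥ 0 one has |R(φ₁) − R(φ₂)| ≥ |φ₁ − φ₂|/(g*·b); consequently the inverse function Φ := R⁻¹ is Lipschitz continuous with Lipschitz constant g*·b on the range of R. -/

import Mathlib

open scoped BigOperators

/-- The "generalized factorial" `g(n)! = g(1)·g(2)···g(n)`, with `g(0)! = 1`. -/
noncomputable def gfact (g : ℕ → ℝ) (n : ℕ) : ℝ := ∏ i ∈ Finset.Icc 1 n, g i

/-- The partition function `Z(φ) = Σ_{n≥0} φⁿ/g(n)!`. -/
noncomputable def Zfun (g : ℕ → ℝ) (φ : ℝ) : ℝ := ∑' n : ℕ, φ ^ n / gfact g n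

/-- The one-site marginal `ν¹_φ(n) = φⁿ/(Z(φ)·g(n)!)`. -/
noncomputable def nu1 (g : ℕ → ℝ) (φ : ℝ) (n : ℕ) : ℝ := φ ^ n / (Zfun g φ * gfact g n)

/-- The mean density `M(φ) = Σ_{n≥0} n·ν¹_φ(n)`. -/
noncomputable def Mfun (g : ℕ → ℝ) (φ : ℝ) : ℝ := ∑' n : ℕ, (n : ℝ) * nu1 g φ n

open MeasureTheory

/-!
Since `Σ g(n) φⁿ/g(n)! = φ Z(φ)` and `g(0) = 0`, one has `g*·M(φ) − φ = E_φ[h]` with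
`h(n) = g*·n − g(n)`, the mean of `h` under `ν¹_φ`. The Lipschitz bound on `g` makes `h`
nondecreasing, and the family `ν¹_φ` is increasing in `φ` for the likelihood-ratio order, so
`φ ↦ g*·M(φ) − φ` is nondecreasing: `M(φ₁) − M(φ₂) ≥ (φ₁ − φ₂)/g*` for `φ₁ ≥ φ₂ ≥ 0`.
For `p ≤ b` the same holds for `φ ↦ M(φ/p)` with `g*·b` in place of `g*`, and integrating in `p`
gives the expansivity of `R`, hence the Lipschitz bound on its inverse.
-/

open Set Finset

section LikelihoodRatio

/-- A weighted Chebyshev inequality: if `q/p` is nondecreasing, the `q`-mean of a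
nondecreasing `h` dominates its `p`-mean. -/
theorem sum_mul_sum_le_of_monotone_ratio {ι : Type*} [LinearOrder ι] {p q h : ι → ℝ}
    (s : Finset ι) (hh : Monotone h) (hpq : ∀ i j, j ≤ i → p i * q j ≤ q i * p j) :
    (∑ i ∈ s, h i * p i) * ∑ i ∈ s, q i ≤ (∑ i ∈ s, h i * q i) * ∑ i ∈ s, p i := by
  have hterms : 0 ≤ ∑ i ∈ s, ∑ j ∈ s, (h i - h j) * (q i * p j - p i * q j) := by
    refine sum_nonneg fun i _ => sum_nonneg fun j _ => ?_
    rcases le_total j i with hji | hij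
    · exact mul_nonneg (sub_nonneg.2 (hh hji)) (sub_nonneg.2 (hpq i j hji))
    · exact mul_nonneg_of_nonpos_of_nonpos (sub_nonpos.2 (hh hij))
        (by linarith [hpq j i hij])
  have hexpand : ((∑ i ∈ s, h i * q i) * ∑ i ∈ s, p i - (∑ i ∈ s, h i * p i) * ∑ i ∈ s, q i)
      + ((∑ i ∈ s, p i) * (∑ i ∈ s, h i * q i) - (∑ i ∈ s, q i) * ∑ i ∈ s, h i * p i)
      = ∑ i ∈ s, ∑ j ∈ s, (h i - h j) * (q i * p j - p i * q j) := by
    simp only [sum_mul_sum, ← sum_sub_distrib, ← sum_add_distrib]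
    exact sum_congr rfl fun i _ => sum_congr rfl fun j _ => by ring
  linarith

theorem tsum_mul_tsum_le_of_monotone_ratio {p q h : ℕ → ℝ} (hh : Monotone h)
    (hpq : ∀ i j, j ≤ i → p i * q j ≤ q i * p j) (hp : Summable p) (hq : Summable q)
    (hhp : Summable fun n => h n * p n) (hhq : Summable fun n => h n * q n) :
    (∑' n, h n * p n) * ∑' n, q n ≤ (∑' n, h n * q n) * ∑' n, p n :=
  le_of_tendsto_of_tendsto' (hhp.hasSum.tendsto_sum_nat.mul hq.hasSum.tendsto_sum_nat)
    (hhq.hasSum.tendsto_sum_nat.mul hp.hasSum.tendsto_sum_nat)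
    fun N => sum_mul_sum_le_of_monotone_ratio (range N) hh hpq

theorem pow_mul_pow_le_pow_mul_pow {x y : ℝ} (hy : 0 ≤ y) (hyx : y ≤ x) {i j : ℕ}
    (hji : j ≤ i) : y ^ i * x ^ j ≤ x ^ i * y ^ j := by
  obtain ⟨k, rfl⟩ := Nat.exists_eq_add_of_le hji
  have hx : 0 ≤ x := hy.trans hyx
  calc y ^ (j + k) * x ^ j = (x ^ j * y ^ j) * y ^ k := by ring
    _ ≤ (x ^ j * y ^ j) * x ^ k := by gcongr
    _ = x ^ (j + k) * y ^ j := by ring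

end LikelihoodRatio

section Expansive

theorem abs_sub_div_le_abs_sub_of_monotoneOn {f : ℝ → ℝ} {s : Set ℝ} {c : ℝ}
    (hf : MonotoneOn (fun x => f x - x / c) s) {x y : ℝ} (hx : x ∈ s) (hy : y ∈ s) :
    |x - y| / c ≤ |f x - f y| := by
  wlog hyx : y ≤ x generalizing x y
  · rw [abs_sub_comm, abs_sub_comm (f x)]
    exact this hy hx (le_of_not_ge hyx)
  have := hf hy hx hyx
  rw [abs_of_nonneg (sub_nonneg.2 hyx), sub_div]
  exact le_trans (by linarith) (le_abs_self _)

theorem abs_invFunOn_sub_le {f : ℝ → ℝ} {s : Set ℝ} {c : ℝ} (hc : 0 < c)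
    (hf : ∀ x ∈ s, ∀ y ∈ s, |x - y| / c ≤ |f x - f y|) {ρ₁ ρ₂ : ℝ} (h₁ : ρ₁ ∈ f '' s)
    (h₂ : ρ₂ ∈ f '' s) :
    |Function.invFunOn f s ρ₁ - Function.invFunOn f s ρ₂| ≤ c * |ρ₁ - ρ₂| := by
  have := hf _ (Function.invFunOn_mem h₁) _ (Function.invFunOn_mem h₂)
  rwa [Function.invFunOn_eq h₁, Function.invFunOn_eq h₂, div_le_iff₀ hc, mul_comm] at this

end Expansive

section Annealing

variable {F : ℝ → ℝ} {m : Measure ℝ} {a b : ℝ}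

theorem sub_div_le_sub_of_monotoneOn_mul_sub {s : Set ℝ} {c : ℝ} (hc : 0 < c)
    (hcF : MonotoneOn (fun x => c * F x - x) s) {x y : ℝ} (hx : x ∈ s) (hy : y ∈ s)
    (hxy : x ≤ y) : (y - x) / c ≤ F y - F x := by
  have := hcF hx hy hxy
  rw [div_le_iff₀' hc]
  linarith

theorem integrable_comp_div [IsFiniteMeasure m] (hF : Measurable F)
    (hF0 : ∀ x, 0 ≤ x → 0 ≤ F x) (hFmono : MonotoneOn F (Ici 0)) (ha : 0 < a)
    (hm : ∀ᵐ p ∂m, p ∈ Icc a b) {φ : ℝ} (hφ : 0 ≤ φ) :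
    Integrable (fun p => F (φ / p)) m := by
  refine Integrable.mono' (integrable_const (F (φ / a)))
    (hF.comp (measurable_const.div measurable_id)).aestronglyMeasurable ?_
  filter_upwards [hm] with p hp
  have hp0 : 0 < p := ha.trans_le hp.1
  rw [Real.norm_eq_abs, abs_of_nonneg (hF0 _ (by positivity))]
  exact hFmono (mem_Ici.2 (by positivity)) (mem_Ici.2 (by positivity))
    (div_le_div_of_nonneg_left hφ ha hp.1)

theorem monotoneOn_integral_comp_div_sub [IsProbabilityMeasure m] {c : ℝ} (hc : 0 < c)
    (hF : Measurable F) (hF0 : ∀ x, 0 ≤ x → 0 ≤ F x)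
    (hcF : MonotoneOn (fun x => c * F x - x) (Ici 0)) (ha : 0 < a)
    (hm : ∀ᵐ p ∂m, p ∈ Icc a b) :
    MonotoneOn (fun φ => ∫ p, F (φ / p) ∂m - φ / (c * b)) (Ici 0) := by
  have hFmono : MonotoneOn F (Ici 0) := fun x hx y hy hxy =>
    sub_nonneg.1 <| (div_nonneg (sub_nonneg.2 hxy) hc.le).trans
      (sub_div_le_sub_of_monotoneOn_mul_sub hc hcF hx hy hxy)
  intro φ₂ hφ₂ φ₁ hφ₁ h12
  have hpt : ∀ᵐ p ∂m, F (φ₂ / p) + (φ₁ - φ₂) / (c * b) ≤ F (φ₁ / p) := by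
    filter_upwards [hm] with p hp
    have hp0 : 0 < p := ha.trans_le hp.1
    have hsite := sub_div_le_sub_of_monotoneOn_mul_sub hc hcF
      (mem_Ici.2 (div_nonneg hφ₂ hp0.le)) (mem_Ici.2 (div_nonneg hφ₁ hp0.le))
      (div_le_div_of_nonneg_right h12 hp0.le)
    have hb : (φ₁ - φ₂) / (c * b) ≤ (φ₁ / p - φ₂ / p) / c := by
      rw [← sub_div, div_div, mul_comm p]
      exact div_le_div_of_nonneg_left (sub_nonneg.2 h12) (by positivity)
        (mul_le_mul_of_nonneg_left hp.2 hc.le)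
    linarith
  have hint {φ : ℝ} (hφ : 0 ≤ φ) := integrable_comp_div hF hF0 hFmono ha hm hφ
  have hmono := integral_mono_ae (f := fun p => F (φ₂ / p) + (φ₁ - φ₂) / (c * b))
    ((hint hφ₂).add (integrable_const _)) (hint hφ₁) hpt
  rw [integral_add (hint hφ₂) (integrable_const _), integral_const, probReal_univ,
    one_smul, sub_div] at hmono
  simp only
  linarith

end Annealing

section PartitionFunction

variable {g : ℕ → ℝ} {g₀ : ℝ}

theorem gfact_succ (g : ℕ → ℝ) (n : ℕ) : gfact g (n + 1) = gfact g n * g (n + 1) :=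
  prod_Icc_succ_top (by omega) g

theorem pow_mul_factorial_le_gfact (hg₀ : 0 ≤ g₀) (hlin : ∀ n, g₀ * n ≤ g n) (n : ℕ) :
    g₀ ^ n * n.factorial ≤ gfact g n := by
  induction n with
  | zero => simp [gfact]
  | succ k ih =>
    rw [gfact_succ, pow_succ, Nat.factorial_succ, Nat.cast_mul]
    calc g₀ ^ k * g₀ * ((k + 1 : ℕ) * k.factorial : ℝ)
        = (g₀ ^ k * k.factorial) * (g₀ * (k + 1 : ℕ)) := by ring
      _ ≤ gfact g k * g (k + 1) :=
        mul_le_mul ih (hlin _) (by positivity) (le_trans (by positivity) ih)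

theorem gfact_pos (hg₀ : 0 < g₀) (hlin : ∀ n, g₀ * n ≤ g n) (n : ℕ) : 0 < gfact g n :=
  lt_of_lt_of_le (by positivity) (pow_mul_factorial_le_gfact hg₀.le hlin n)

theorem summable_pow_div_gfact (hg₀ : 0 < g₀) (hlin : ∀ n, g₀ * n ≤ g n) (x : ℝ) :
    Summable fun n => x ^ n / gfact g n := by
  refine Summable.of_norm_bounded (Real.summable_pow_div_factorial (|x| / g₀)) fun n => ?_
  rw [norm_div, norm_pow, Real.norm_eq_abs, Real.norm_of_nonneg (gfact_pos hg₀ hlin n).le,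
    div_pow, div_div]
  exact div_le_div_of_nonneg_left (by positivity) (by positivity)
    (pow_mul_factorial_le_gfact hg₀.le hlin n)

theorem hasSum_mul_pow_div_gfact (hg₀ : 0 < g₀) (hlin : ∀ n, g₀ * n ≤ g n) (hgzero : g 0 = 0)
    (x : ℝ) : HasSum (fun n => g n * (x ^ n / gfact g n)) (x * Zfun g x) := by
  refine (hasSum_nat_add_iff' 1).1 ?_
  rw [sum_range_one, hgzero, zero_mul, sub_zero]
  have hshift : (fun n => g (n + 1) * (x ^ (n + 1) / gfact g (n + 1)))
      = fun n => x * (x ^ n / gfact g n) := by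
    funext n
    have hg : 0 < g (n + 1) := (by positivity : 0 < g₀ * ((n + 1 : ℕ) : ℝ)).trans_le (hlin _)
    rw [gfact_succ, pow_succ]
    field_simp [(gfact_pos hg₀ hlin n).ne', hg.ne']
  rw [hshift]
  exact (summable_pow_div_gfact hg₀ hlin x).hasSum.mul_left x

theorem summable_natCast_mul_pow_div_gfact (hg₀ : 0 < g₀) (hlin : ∀ n, g₀ * n ≤ g n)
    (hgzero : g 0 = 0) (x : ℝ) : Summable fun n : ℕ => (n : ℝ) * (x ^ n / gfact g n) := by
  refine Summable.of_norm_bounded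
    ((hasSum_mul_pow_div_gfact hg₀ hlin hgzero |x|).summable.div_const g₀) fun n => ?_
  rw [norm_mul, norm_div, norm_pow, Real.norm_natCast, Real.norm_eq_abs,
    Real.norm_of_nonneg (gfact_pos hg₀ hlin n).le, le_div_iff₀ hg₀, mul_right_comm,
    mul_comm (n : ℝ)]
  exact mul_le_mul_of_nonneg_right (hlin n) (div_nonneg (by positivity) (gfact_pos hg₀ hlin n).le)

theorem Zfun_pos (hg₀ : 0 < g₀) (hlin : ∀ n, g₀ * n ≤ g n) {x : ℝ} (hx : 0 ≤ x) :
    0 < Zfun g x :=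
  (summable_pow_div_gfact hg₀ hlin x).tsum_pos
    (fun n => div_nonneg (pow_nonneg hx n) (gfact_pos hg₀ hlin n).le) 0 (by simp [gfact])

theorem Mfun_eq (g : ℕ → ℝ) (x : ℝ) :
    Mfun g x = (∑' n : ℕ, (n : ℝ) * (x ^ n / gfact g n)) / Zfun g x := by
  rw [Mfun, ← tsum_div_const]
  exact tsum_congr fun n => by rw [nu1]; ring

theorem Mfun_nonneg (hg₀ : 0 < g₀) (hlin : ∀ n, g₀ * n ≤ g n) {x : ℝ} (hx : 0 ≤ x) :
    0 ≤ Mfun g x := by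
  rw [Mfun_eq]
  exact div_nonneg (tsum_nonneg fun n => by have := gfact_pos hg₀ hlin n; positivity)
    (Zfun_pos hg₀ hlin hx).le

theorem measurable_Mfun (g : ℕ → ℝ) : Measurable (Mfun g) :=
  Measurable.tsum fun n => measurable_const.mul <| (measurable_id.pow_const n).div <|
    (Measurable.tsum fun k => (measurable_id.pow_const k).div_const _).mul_const _

theorem hasSum_sub_mul_pow_div_gfact (hg₀ : 0 < g₀) (hlin : ∀ n, g₀ * n ≤ g n)
    (hgzero : g 0 = 0) (c : ℝ) {x : ℝ} (hx : 0 ≤ x) :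
    HasSum (fun n => (c * n - g n) * (x ^ n / gfact g n)) ((c * Mfun g x - x) * Zfun g x) := by
  have hsplit : (fun n : ℕ => (c * n - g n) * (x ^ n / gfact g n))
      = fun n => c * (n * (x ^ n / gfact g n)) - g n * (x ^ n / gfact g n) :=
    funext fun n => by ring
  have hvalue : (c * Mfun g x - x) * Zfun g x
      = c * (∑' n : ℕ, (n : ℝ) * (x ^ n / gfact g n)) - x * Zfun g x := by
    rw [Mfun_eq]
    field_simp [(Zfun_pos hg₀ hlin hx).ne']
  rw [hsplit, hvalue]
  exact ((summable_natCast_mul_pow_div_gfact hg₀ hlin hgzero x).hasSum.mul_left c).sub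
    (hasSum_mul_pow_div_gfact hg₀ hlin hgzero x)

theorem monotoneOn_mul_Mfun_sub (hg₀ : 0 < g₀) (hlin : ∀ n, g₀ * n ≤ g n) (hgzero : g 0 = 0)
    {c : ℝ} (hLip : ∀ n, |g (n + 1) - g n| ≤ c) :
    MonotoneOn (fun x => c * Mfun g x - x) (Ici 0) := by
  intro y hy x hx hyx
  have hh : Monotone fun n : ℕ => c * n - g n := monotone_nat_of_le_succ fun n => by
    push_cast
    linarith [(abs_le.1 (hLip n)).2]
  have hratio : ∀ i j, j ≤ i →
      y ^ i / gfact g i * (x ^ j / gfact g j) ≤ x ^ i / gfact g i * (y ^ j / gfact g j) := by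
    intro i j hji
    rw [div_mul_div_comm, div_mul_div_comm]
    exact div_le_div_of_nonneg_right (pow_mul_pow_le_pow_mul_pow hy hyx hji)
      (mul_pos (gfact_pos hg₀ hlin i) (gfact_pos hg₀ hlin j)).le
  have hEy := hasSum_sub_mul_pow_div_gfact hg₀ hlin hgzero c hy
  have hEx := hasSum_sub_mul_pow_div_gfact hg₀ hlin hgzero c hx
  have key := tsum_mul_tsum_le_of_monotone_ratio hh hratio (summable_pow_div_gfact hg₀ hlin y)
    (summable_pow_div_gfact hg₀ hlin x) hEy.summable hEx.summable
  rw [hEy.tsum_eq, hEx.tsum_eq] at key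
  change _ * Zfun g x ≤ _ * Zfun g y at key
  refine le_of_mul_le_mul_right ?_ (mul_pos (Zfun_pos hg₀ hlin hy) (Zfun_pos hg₀ hlin hx))
  simp only
  linarith

end PartitionFunction

theorem annealed_density_expansive_general
    (g : ℕ → ℝ) (g₀ gstar : ℝ) (hg₀ : 0 < g₀) (hgs : g₀ ≤ gstar)
    (hgzero : g 0 = 0)
    (hLip : ∀ n, |g (n + 1) - g n| ≤ gstar)
    (hlin : ∀ n, g₀ * n ≤ g n)
    (a b : ℝ) (ha : 0 < a) (hab : a < b)
    (m : Measure ℝ) [IsProbabilityMeasure m] (hm : ∀ᵐ p ∂m, p ∈ Set.Icc a b) :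
    (∀ φ₁ φ₂ : ℝ, 0 ≤ φ₁ → 0 ≤ φ₂ →
        |φ₁ - φ₂| / (gstar * b) ≤
          |(∫ p, Mfun g (φ₁ / p) ∂m) - ∫ p, Mfun g (φ₂ / p) ∂m|) ∧
      (∀ ρ₁ ∈ (fun φ => ∫ p, Mfun g (φ / p) ∂m) '' Set.Ici (0 : ℝ),
        ∀ ρ₂ ∈ (fun φ => ∫ p, Mfun g (φ / p) ∂m) '' Set.Ici (0 : ℝ),
        |Function.invFunOn (fun φ => ∫ p, Mfun g (φ / p) ∂m) (Set.Ici 0) ρ₁ -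
            Function.invFunOn (fun φ => ∫ p, Mfun g (φ / p) ∂m) (Set.Ici 0) ρ₂| ≤
          gstar * b * |ρ₁ - ρ₂|) := by
  have hgstar : 0 < gstar := hg₀.trans_le hgs
  have hc : 0 < gstar * b := mul_pos hgstar (ha.trans hab)
  have hR : MonotoneOn (fun φ => ∫ p, Mfun g (φ / p) ∂m - φ / (gstar * b)) (Ici 0) :=
    monotoneOn_integral_comp_div_sub hgstar (measurable_Mfun g)
      (fun _ hx => Mfun_nonneg hg₀ hlin hx) (monotoneOn_mul_Mfun_sub hg₀ hlin hgzero hLip) ha hm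
  have hexp : ∀ φ₁ ∈ Ici (0 : ℝ), ∀ φ₂ ∈ Ici (0 : ℝ),
      |φ₁ - φ₂| / (gstar * b) ≤ |(∫ p, Mfun g (φ₁ / p) ∂m) - ∫ p, Mfun g (φ₂ / p) ∂m| :=
    fun _ h₁ _ h₂ => abs_sub_div_le_abs_sub_of_monotoneOn hR h₁ h₂
  exact ⟨fun φ₁ φ₂ h₁ h₂ => hexp φ₁ h₁ φ₂ h₂, fun _ h₁ _ h₂ => abs_invFunOn_sub_le hc hexp h₁ h₂⟩

/-- Expansivity of the annealed density function `R(φ) := ∫ M(φ/p) dm(p)`: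
for all `φ₁, φ₂ ≥ 0`, `|R(φ₁) − R(φ₂)| ≥ |φ₁ − φ₂|/(g*·b)`; consequently the inverse
function `Φ = R⁻¹` is Lipschitz with constant `g*·b` on the range of `R` over `[0,∞)`. -/
theorem annealed_density_expansive
    (g : ℕ → ℝ) (g₀ gstar : ℝ) (hg₀ : 0 < g₀) (hgs : g₀ ≤ gstar)
    (hgzero : g 0 = 0) (hgpos : ∀ n, 1 ≤ n → 0 < g n)
    (hLip : ∀ n, |g (n + 1) - g n| ≤ gstar)
    (hlin : ∀ n, g₀ * n ≤ g n)
    (a b : ℝ) (ha : 0 < a) (hab : a < b)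
    (m : Measure ℝ) [IsProbabilityMeasure m] (hm : ∀ᵐ p ∂m, p ∈ Set.Icc a b) :
    (∀ φ₁ φ₂ : ℝ, 0 ≤ φ₁ → 0 ≤ φ₂ →
        |φ₁ - φ₂| / (gstar * b) ≤
          |(∫ p, Mfun g (φ₁ / p) ∂m) - ∫ p, Mfun g (φ₂ / p) ∂m|) ∧
      (∀ ρ₁ ∈ (fun φ => ∫ p, Mfun g (φ / p) ∂m) '' Set.Ici (0 : ℝ),
        ∀ ρ₂ ∈ (fun φ => ∫ p, Mfun g (φ / p) ∂m) '' Set.Ici (0 : ℝ),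
        |Function.invFunOn (fun φ => ∫ p, Mfun g (φ / p) ∂m) (Set.Ici 0) ρ₁ -
            Function.invFunOn (fun φ => ∫ p, Mfun g (φ / p) ∂m) (Set.Ici 0) ρ₂| ≤
          gstar * b * |ρ₁ - ρ₂|) :=
  annealed_density_expansive_general g g₀ gstar hg₀ hgs hgzero hLip hlin a b ha hab m hm
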